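/- arXiv:1305.4186 — 4 statements merged into one kernel-verified Lean document; each statement's English description precedes it below -/
import Mathlib

section
/- Let F be a compact family of finite subsets of the natural numbers (compact in the product/pointwise topology on the power set of ℕ). Then for every infinite set N ⊆ ℕ there exists an infinite subset M ⊆ N such that the trace family F[M] = {F ∩ M : F ∈ F} is hereditary, i.e., if A ⊆ B and B ∈ F[M], then A ∈ F[M]. -/
open Set Filter

/-!
Fix a nonprincipal ultrafilter `U` containing `N`. To every finite set `t` contained in a
member of `F` attach a canonical witness `W t ∈ F` containing `t`: if `U`-almost every `m`
extends `t` to a set still contained in a member of `F`, let `W t` be the `U`-limit of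
`W (t ∪ {m})`; otherwise take any witness. The recursion terminates because, by compactness,
there is no infinite strictly increasing chain of finite sets each contained in a member of `F`.

Then choose distinct `m₀, m₁, …` in `N` one at a time, each from a `U`-large set: for every
admissible `t ⊆ S = {m₀, …, m_k}`, `m_{k+1}` lies outside `W t`, and it extends `t` only if
`U`-almost every `m` does and `W (t ∪ {m_{k+1}})` agrees with `W t` on `S`. By induction every
`W t` traces exactly `t` on each stage, hence on `M = {m₀, m₁, …}`, so that `F[M]` contains
every finite subset of a member of `F[M]`.
-/

section UltrafilterLimit

variable {ι α Y : Type*}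

theorem Ultrafilter.lim_map_mem [TopologicalSpace Y] [CompactSpace Y] {F : Set Y}
    (hF : IsClosed F) (l : Ultrafilter ι) {f : ι → Y} (hf : ∀ᶠ i in l, f i ∈ F) :
    (l.map f).lim ∈ F :=
  hF.mem_of_tendsto (l.map f).le_nhds_lim hf

theorem Ultrafilter.eventually_apply_eq_lim_map [TopologicalSpace Y] [DiscreteTopology Y]
    [CompactSpace Y] (l : Ultrafilter ι) (f : ι → α → Y) (x : α) :
    ∀ᶠ i in l, f i x = (l.map f).lim x := by
  have h := tendsto_pi_nhds.1 (l.map f).le_nhds_lim x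
  rwa [nhds_discrete, tendsto_pure] at h

end UltrafilterLimit

namespace Rosenthal

structure IsCompactFamily (F : Set (ℕ → Bool)) : Prop where
  isClosed : IsClosed F
  finite_support : ∀ f ∈ F, {n | f n = true}.Finite

def Covered (F : Set (ℕ → Bool)) (t : Finset ℕ) : Prop :=
  ∃ f ∈ F, ∀ x ∈ t, f x = true

def CoveredSSuperset (F : Set (ℕ → Bool)) (s t : Finset ℕ) : Prop :=
  t ⊂ s ∧ Covered F s

def extensions (F : Set (ℕ → Bool)) (t : Finset ℕ) : Set ℕ :=
  {m | m ∉ t ∧ Covered F (insert m t)}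

variable {F : Set (ℕ → Bool)}

theorem Covered.mono {s t : Finset ℕ} (hst : s ⊆ t) (ht : Covered F t) : Covered F s :=
  let ⟨f, hf, hft⟩ := ht
  ⟨f, hf, fun x hx => hft x (hst hx)⟩

namespace IsCompactFamily

variable (hF : IsCompactFamily F)
include hF

theorem exists_not_covered_of_strictMono {c : ℕ → Finset ℕ} (hc : StrictMono c) :
    ∃ n, ¬Covered F (c n) := by
  by_contra! hcov
  choose f hfF hfc using hcov
  set l := hyperfilter ℕ
  have hgF : (l.map f).lim ∈ F := l.lim_map_mem hF.isClosed (.of_forall hfF)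
  have hcg : ∀ n, ↑(c n) ⊆ {x | (l.map f).lim x = true} := fun n x hx => by
    show (l.map f).lim x = true
    obtain ⟨i, hni, hi⟩ :=
      (((eventually_ge_atTop n).filter_mono Nat.hyperfilter_le_atTop).and
        (l.eventually_apply_eq_lim_map f x)).exists
    exact hi ▸ hfc i x (hc.monotone hni hx)
  have hfin := hF.finite_support _ hgF
  have hle := Finset.card_le_card (hfin.subset_toFinset.2 (hcg (hfin.toFinset.card + 1)))
  have hge := (Finset.card_strictMono.comp hc).id_le (hfin.toFinset.card + 1)
  simp only [id, Function.comp_apply] at hge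
  omega

theorem wellFounded_coveredSSuperset : WellFounded (CoveredSSuperset F) := by
  refine Subrelation.wf (r := fun s t => s > t ∧ Covered F s ∧ Covered F t)
    (fun h => ⟨h.1, h.2, h.2.mono h.1.subset⟩) (Set.wellFoundedOn_iff.1 ?_)
  refine Set.wellFoundedOn_iff_no_descending_seq.2 fun c hc => ?_
  obtain ⟨n, hn⟩ := hF.exists_not_covered_of_strictMono fun a b h => c.map_rel_iff.2 h
  exact hn (hc n)

open scoped Classical in
noncomputable def witness (U : Ultrafilter ℕ) : Finset ℕ → ℕ → Bool :=
  hF.wellFounded_coveredSSuperset.fix fun t rec =>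
    if extensions F t ∈ U then
      (U.map fun m => if hm : m ∈ extensions F t then
        rec (insert m t) ⟨Finset.ssubset_insert hm.1, hm.2⟩ else fun _ => false).lim
    else if ht : Covered F t then ht.choose else fun _ => false

variable (U : Ultrafilter ℕ) {t : Finset ℕ}

theorem witness_eq_lim (hext : extensions F t ∈ U) :
    hF.witness U t = (U.map fun m => hF.witness U (insert m t)).lim := by
  rw [witness, WellFounded.fix_eq, if_pos hext]
  congr 1
  refine Ultrafilter.coe_injective (Filter.map_congr ?_)
  filter_upwards [hext] with m hm
  rw [dif_pos hm]

theorem witness_eq_choose (hext : extensions F t ∉ U) (ht : Covered F t) :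
    hF.witness U t = ht.choose := by
  rw [witness, WellFounded.fix_eq, if_neg hext, dif_pos ht]

theorem witness_mem (ht : Covered F t) : hF.witness U t ∈ F := by
  induction t using hF.wellFounded_coveredSSuperset.induction with
  | _ t ih =>
    by_cases hext : extensions F t ∈ U
    · rw [hF.witness_eq_lim U hext]
      exact U.lim_map_mem hF.isClosed <| mem_of_superset hext fun m hm =>
        ih _ ⟨Finset.ssubset_insert hm.1, hm.2⟩ hm.2
    · rw [hF.witness_eq_choose U hext ht]
      exact ht.choose_spec.1

theorem witness_apply_of_mem (ht : Covered F t) {x : ℕ} (hx : x ∈ t) :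
    hF.witness U t x = true := by
  induction t using hF.wellFounded_coveredSSuperset.induction with
  | _ t ih =>
    by_cases hext : extensions F t ∈ U
    · rw [hF.witness_eq_lim U hext]
      obtain ⟨m, hmx, hm⟩ :=
        ((U.eventually_apply_eq_lim_map (fun m => hF.witness U (insert m t)) x).and hext).exists
      rw [← hmx]
      exact ih _ ⟨Finset.ssubset_insert hm.1, hm.2⟩ hm.2 (Finset.mem_insert_of_mem hx)
    · rw [hF.witness_eq_choose U hext ht]
      exact ht.choose_spec.2 x hx

theorem eventually_witness_insert_apply_eq (hext : extensions F t ∈ U) (x : ℕ) :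
    ∀ᶠ m in U, hF.witness U (insert m t) x = hF.witness U t x := by
  rw [hF.witness_eq_lim U hext]
  exact U.eventually_apply_eq_lim_map _ x

variable {U} {N : Set ℕ}

def GoodNext (U : Ultrafilter ℕ) (N : Set ℕ) (S : Finset ℕ) (m : ℕ) : Prop :=
  m ∈ N ∧ m ∉ S ∧ ∀ t ∈ S.powerset, Covered F t → hF.witness U t m = false ∧
    (m ∈ extensions F t →
      extensions F t ∈ U ∧ ∀ y ∈ S, hF.witness U (insert m t) y = hF.witness U t y)

theorem eventually_goodNext (hU : (U : Filter ℕ) ≤ cofinite) (hN : N ∈ U) (S : Finset ℕ) :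
    ∀ᶠ m in U, hF.GoodNext U N S m := by
  have hfresh : ∀ᶠ m in U, m ∉ S := hU S.finite_toSet.compl_mem_cofinite
  refine Eventually.and hN <| hfresh.and ?_
  rw [eventually_all_finset]
  intro t _
  by_cases ht : Covered F t
  swap
  · exact .of_forall fun _ h => absurd h ht
  have houtside : ∀ᶠ m in U, hF.witness U t m = false :=
    mem_of_superset (hU (hF.finite_support _ (hF.witness_mem U ht)).compl_mem_cofinite)
      fun m hm => by simpa using hm
  have hcoherent : ∀ᶠ m in U, m ∈ extensions F t →
      extensions F t ∈ U ∧ ∀ y ∈ S, hF.witness U (insert m t) y = hF.witness U t y := by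
    by_cases hext : extensions F t ∈ U
    · have hagree := (eventually_all_finset S).2 fun y _ =>
        hF.eventually_witness_insert_apply_eq U hext y
      exact hagree.mono fun m hm _ => ⟨hext, hm⟩
    · exact mem_of_superset (U.compl_mem_iff_notMem.2 hext) fun m hm h => absurd h hm
  exact (houtside.and hcoherent).mono fun m hm _ => hm

def WitnessesExactOn (U : Ultrafilter ℕ) (S : Finset ℕ) : Prop :=
  ∀ t ⊆ S, Covered F t → ∀ x ∈ S, hF.witness U t x = true ↔ x ∈ t

theorem WitnessesExactOn.insert {S : Finset ℕ} {m : ℕ} (hS : hF.WitnessesExactOn U S)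
    (hm : hF.GoodNext U N S m) : hF.WitnessesExactOn U (insert m S) := by
  obtain ⟨-, hmS, hgood⟩ := hm
  intro t hts ht x hx
  by_cases hmt : m ∈ t
  · have hts₀ : t.erase m ⊆ S := Finset.subset_insert_iff.1 hts
    have ht₀ : Covered F (t.erase m) := ht.mono (Finset.erase_subset m t)
    have hext : m ∈ extensions F (t.erase m) :=
      ⟨Finset.notMem_erase m t, by rwa [Finset.insert_erase hmt]⟩
    obtain ⟨-, hagree⟩ := (hgood _ (Finset.mem_powerset.2 hts₀) ht₀).2 hext
    rw [Finset.insert_erase hmt] at hagree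
    rcases Finset.mem_insert.1 hx with rfl | hxS
    · exact iff_of_true (hF.witness_apply_of_mem U ht hmt) hmt
    · rw [hagree x hxS, hS _ hts₀ ht₀ x hxS, Finset.mem_erase]
      exact and_iff_right (ne_of_mem_of_not_mem hxS hmS)
  · have hts₀ : t ⊆ S := (Finset.subset_insert_iff_of_notMem hmt).1 hts
    rcases Finset.mem_insert.1 hx with rfl | hxS
    · simpa [hmt] using ((hgood t (Finset.mem_powerset.2 hts₀) ht).1)
    · exact hS t hts₀ ht x hxS

theorem witness_trace_iUnion {S : ℕ → Finset ℕ} (hS_mono : Monotone S)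
    (hS_exact : ∀ k, hF.WitnessesExactOn U (S k)) {t : Finset ℕ}
    (htS : ↑t ⊆ ⋃ k, (S k : Set ℕ)) (ht : Covered F t) :
    {n | hF.witness U t n = true} ∩ ⋃ k, (S k : Set ℕ) = ↑t := by
  have hdir : Directed (· ⊆ ·) fun k => (S k : Set ℕ) :=
    (Monotone.comp (fun _ _ => Finset.coe_subset.2) hS_mono).directed_le
  obtain ⟨k, htk⟩ := hdir.exists_mem_subset_of_finset_subset_biUnion htS
  ext x
  simp only [mem_inter_iff, mem_iUnion, mem_ofPred_eq, Finset.mem_coe]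
  constructor
  · rintro ⟨hx, j, hxj⟩
    have htjk : t ⊆ S (max j k) := Finset.coe_subset.1 htk |>.trans (hS_mono (le_max_right j k))
    exact (hS_exact _ t htjk ht x (hS_mono (le_max_left j k) hxj)).1 hx
  · exact fun hx => ⟨hF.witness_apply_of_mem U ht hx, k, htk hx⟩

theorem exists_infinite_subset_forall_trace_eq (hU : (U : Filter ℕ) ≤ cofinite) (hN : N ∈ U) :
    ∃ M ⊆ N, M.Infinite ∧
      ∀ t : Finset ℕ, ↑t ⊆ M → Covered F t →
        ∃ g ∈ F, {n | g n = true} ∩ M = ↑t := by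
  choose next hnext using fun S => (hF.eventually_goodNext hU hN S).exists
  obtain ⟨S, hS_zero, hS_succ⟩ : ∃ S : ℕ → Finset ℕ,
      S 0 = ∅ ∧ ∀ k, S (k + 1) = insert (next (S k)) (S k) :=
    ⟨fun k => Nat.rec ∅ (fun _ S => insert (next S) S) k, rfl, fun _ => rfl⟩
  have hS_mono : Monotone S :=
    monotone_nat_of_le_succ fun k => (hS_succ k).symm ▸ Finset.subset_insert _ _
  have hS_card : ∀ k, (S k).card = k := by
    intro k
    induction k with
    | zero => rw [hS_zero, Finset.card_empty]
    | succ k ih => rw [hS_succ, Finset.card_insert_of_notMem (hnext _).2.1, ih]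
  have hS_N : ∀ k, (S k : Set ℕ) ⊆ N := by
    intro k
    induction k with
    | zero => simp [hS_zero]
    | succ k ih =>
      rw [hS_succ, Finset.coe_insert]
      exact insert_subset (hnext _).1 ih
  have hS_exact : ∀ k, hF.WitnessesExactOn U (S k) := by
    intro k
    induction k with
    | zero => intro t _ _ x hx; simp [hS_zero] at hx
    | succ k ih => exact hS_succ k ▸ ih.insert hF (hnext _)
  refine ⟨⋃ k, (S k : Set ℕ), iUnion_subset hS_N, fun hfin => ?_, fun t htS ht =>
    ⟨hF.witness U t, hF.witness_mem U ht, hF.witness_trace_iUnion hS_mono hS_exact htS ht⟩⟩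
  have hsub : S (hfin.toFinset.card + 1) ⊆ hfin.toFinset :=
    hfin.subset_toFinset.2 (subset_iUnion (fun k => (S k : Set ℕ)) _)
  have := Finset.card_le_card hsub
  rw [hS_card] at this
  omega

end IsCompactFamily

end Rosenthal

open Rosenthal in
/-- **Rosenthal's combinatorial principle.**  Let `F` be a compact family of finite subsets
of `ℕ`, identified with a closed subset of the Cantor space `ℕ → Bool` all of whose members
have finite support.  Then for every infinite `N ⊆ ℕ` there is an infinite `M ⊆ N` such that
the trace family `F[M] = {F ∩ M : F ∈ F}` is hereditary. -/
theorem rosenthal_combinatorial_principle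
    (F : Set (ℕ → Bool)) (hF_closed : IsClosed F)
    (hF_finite : ∀ f ∈ F, {n : ℕ | f n = true}.Finite)
    (N : Set ℕ) (hN : N.Infinite) :
    ∃ M : Set ℕ, M ⊆ N ∧ M.Infinite ∧
      ∀ A B : Set ℕ, A ⊆ B →
        (∃ f ∈ F, B = {n : ℕ | f n = true} ∩ M) →
        (∃ g ∈ F, A = {n : ℕ | g n = true} ∩ M) := by
  have hF : IsCompactFamily F := ⟨hF_closed, hF_finite⟩
  have := hN.cofinite_inf_principal_neBot
  let U := Ultrafilter.of (cofinite ⊓ 𝓟 N)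
  have hU : (U : Filter ℕ) ≤ cofinite := (Ultrafilter.of_le _).trans inf_le_left
  have hNU : N ∈ U := Ultrafilter.of_le _ (mem_inf_of_right (mem_principal_self N))
  obtain ⟨M, hMN, hM, htrace⟩ := hF.exists_infinite_subset_forall_trace_eq hU hNU
  refine ⟨M, hMN, hM, ?_⟩
  rintro A B hAB ⟨f, hf, rfl⟩
  have hA : A.Finite := (hF_finite f hf).subset fun x hx => (hAB hx).1
  have hAfM : ∀ x ∈ hA.toFinset, f x = true ∧ x ∈ M := fun x hx =>
    hAB (hA.mem_toFinset.1 hx)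
  obtain ⟨g, hg, hgA⟩ :=
    htrace hA.toFinset (fun x hx => (hAfM x hx).2) ⟨f, hf, fun x hx => (hAfM x hx).1⟩
  exact ⟨g, hg, by rw [hgA, hA.coe_toFinset]⟩
end

section
/- Let S be the dyadic tree and (x_s)_{s∈S} a family in a separable Banach space X. The set A = {β ∈ C(S) : (x_s)_{s∈β} is semi-boundedly complete} is co-analytic in the Polish space C(S); equivalently, its complement is the projection to C(S) of a Borel subset of C(S) × ℝ^ℕ. -/
/-!
A chain `β` fails semi-bounded completeness exactly when some bounded `λ ∈ ℝ^ℕ` has bounded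
partial sums `∑_{i<n} λ_i x_{β_i}` and does not tend to `0`. Each partial sum is continuous in
`(β, λ)`, so these countably many conditions cut out a Borel set of the Polish space
`C(S) × ℝ^ℕ`, and the complement of `A` is its projection.
-/

open Filter Topology Set

noncomputable section

instance : TopologicalSpace (List Bool) := ⊥
instance : MeasurableSpace (List Bool) := ⊤

/-- A strictly increasing (for the initial-segment/prefix order of the dyadic tree
`S = List Bool`) enumeration of an infinite chain of `S`. -/
def IsChainSeq (s : ℕ → List Bool) : Prop :=
  ∀ i : ℕ, s i <+: s (i + 1) ∧ s i ≠ s (i + 1)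

/-- The Polish space `C(S)` of infinite chains of the dyadic tree, each chain enumerated
increasingly; the (product of discrete) topology coincides with the one inherited from
`2^S`. -/
abbrev ChainSpace : Type := {s : ℕ → List Bool // IsChainSeq s}

/-- `e` realizes a (dyadic) subtree of `S`, namely its range `T = e '' S`, via an order
isomorphism of `S` onto `T`: `T` has a single minimal element and every element of `T`
has exactly two immediate successors in `T`. -/
def IsSubtree (e : List Bool → List Bool) : Prop :=
  ∀ s t : List Bool, s <+: t ↔ e s <+: e t

/-- `y` is semi-boundedly complete: for every bounded scalar sequence `(λ_i)`, if the
partial sums `∑_{i<n} λ_i y_i` are norm-bounded then `λ_i → 0`. -/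
def SemiBoundedlyComplete {X : Type*} [NormedAddCommGroup X] [NormedSpace ℝ X]
    (y : ℕ → X) : Prop :=
  ∀ lam : ℕ → ℝ, (∃ M : ℝ, ∀ i, |lam i| ≤ M) →
    (∃ K : ℝ, ∀ n : ℕ, ‖∑ i ∈ Finset.range n, lam i • y i‖ ≤ K) →
    Tendsto lam atTop (𝓝 0)

section Counterexamples

variable {α X : Type*} [NormedAddCommGroup X] [NormedSpace ℝ X]

def semiBoundedlyCompleteCounterexamples (y : α → ℕ → X) : Set (α × (ℕ → ℝ)) :=
  {p | BddAbove (range fun i => |p.2 i|) ∧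
    BddAbove (range fun n => ‖∑ i ∈ Finset.range n, p.2 i • y p.1 i‖) ∧
    ¬Tendsto p.2 atTop (𝓝 0)}

theorem compl_setOf_semiBoundedlyComplete (y : α → ℕ → X) :
    {a | SemiBoundedlyComplete (y a)}ᶜ = Prod.fst '' semiBoundedlyCompleteCounterexamples y := by
  ext a
  simp [SemiBoundedlyComplete, semiBoundedlyCompleteCounterexamples, bddAbove_def]

theorem measurableSet_semiBoundedlyCompleteCounterexamples
    [TopologicalSpace α] [MeasurableSpace α] [OpensMeasurableSpace α]
    {y : α → ℕ → X} (hy : ∀ i, Continuous fun a => y a i) :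
    MeasurableSet (semiBoundedlyCompleteCounterexamples y) := by
  have hcoord (i : ℕ) : Continuous fun p : α × (ℕ → ℝ) => p.2 i := by fun_prop
  have hsum (n : ℕ) :
      Continuous fun p : α × (ℕ → ℝ) => ‖∑ i ∈ Finset.range n, p.2 i • y p.1 i‖ :=
    continuous_finsetSum _ (fun i _ => (hcoord i).smul ((hy i).comp continuous_fst)) |>.norm
  refine (measurableSet_bddAbove_range fun i => (hcoord i).abs.measurable).inter
    ((measurableSet_bddAbove_range fun n => (hsum n).measurable).inter ?_)
  exact (measurableSet_tendsto _ fun i => (hcoord i).measurable).compl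

end Counterexamples

instance : DiscreteTopology (List Bool) := ⟨rfl⟩

instance : BorelSpace (List Bool) := ⟨borel_eq_top_of_discrete.symm⟩

theorem isClosed_setOf_isChainSeq : IsClosed {s : ℕ → List Bool | IsChainSeq s} := by
  simp only [IsChainSeq, ofPred_forall]
  exact isClosed_iInter fun i =>
    IsClosed.preimage (f := fun s : ℕ → List Bool => (s i, s (i + 1))) (by fun_prop)
      (isClosed_discrete {p : List Bool × List Bool | p.1 <+: p.2 ∧ p.1 ≠ p.2})

instance : PolishSpace (List Bool) := {}

instance : PolishSpace ChainSpace := isClosed_setOf_isChainSeq.polishSpace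

instance : BorelSpace ChainSpace := Subtype.borelSpace _

theorem semiBoundedlyComplete_chains_coanalytic_general
    {X : Type*} [NormedAddCommGroup X] [NormedSpace ℝ X] (x : List Bool → X) :
    MeasureTheory.AnalyticSet
      {β : ChainSpace | SemiBoundedlyComplete (fun i => x (β.1 i))}ᶜ ∧
    ∃ B : Set (ChainSpace × (ℕ → ℝ)), MeasurableSet B ∧
      {β : ChainSpace | SemiBoundedlyComplete (fun i => x (β.1 i))}ᶜ = Prod.fst '' B := by
  have hB := measurableSet_semiBoundedlyCompleteCounterexamples
    (y := fun (β : ChainSpace) i => x (β.1 i)) fun i =>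
      continuous_of_discreteTopology.comp ((continuous_apply i).comp continuous_subtype_val)
  rw [compl_setOf_semiBoundedlyComplete]
  exact ⟨hB.analyticSet.image_of_continuous continuous_fst, _, hB, rfl⟩

/-- The set `A = {β ∈ C(S) : (x_s)_{s∈β} is semi-boundedly complete}` is co-analytic in the
Polish space `C(S)`: its complement is analytic, and indeed is the projection to `C(S)` of
a Borel subset of `C(S) × ℝ^ℕ`. -/
theorem semiBoundedlyComplete_chains_coanalytic
    {X : Type*} [NormedAddCommGroup X] [NormedSpace ℝ X] [CompleteSpace X]
    [TopologicalSpace.SeparableSpace X] (x : List Bool → X) :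
    MeasureTheory.AnalyticSet
      {β : ChainSpace | SemiBoundedlyComplete (fun i => x (β.1 i))}ᶜ ∧
    ∃ B : Set (ChainSpace × (ℕ → ℝ)), MeasurableSet B ∧
      {β : ChainSpace | SemiBoundedlyComplete (fun i => x (β.1 i))}ᶜ = Prod.fst '' B :=
  semiBoundedlyComplete_chains_coanalytic_general x
end
end

section
/- Let (y_i) be a normalized basic sequence in a Banach space with basis constant D, let δ > 0, and suppose there exists R > 0 such that for every absolutely convex combination x = ∑_{n>k} a_n y_n of the tail (y_n)_{n>k} with ‖x‖ ≥ δ and every choice of signs, the signed sum has norm ≥ R. Suppose also the finite sequence (y_1,…,y_k) is B-unconditional. Then (y_i) is convexly unconditional at level 1/k with constant C = min{ δ/(2B·D) · (1/2) , (δ/(2D)) · R } in the following sense: for every absolutely convex combination x = ∑_{n=1}^∞ a_n y_n with ‖x‖ ≥ 1/k (where 1/(2k) ≤ δ is assumed), and every sequence of signs (ε_n), ‖∑_n ε_n a_n y_n‖ ≥ C, provided δ = 1/(2k). -/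
/-!
Split `∑ aₙ yₙ` at `k`. Since `1/k = 2δ`, the head or the tail has norm at least `δ`.
Changing signs in a large head costs a factor `2B` (split the head by the sign of `εₙ` and
use `B`-unconditionality on each part), and passing from the head to the whole signed sum a
factor `D`. A large tail has signed sums of norm at least `R` by hypothesis, and the signed
tail is the whole signed sum minus its head, so it costs at most a factor `1 + D ≤ 2D`.
-/

open Finset

theorem Finset.sum_range_eq_sum_range_min_add_sum_Ico {M : Type*} [AddCommMonoid M]
    (f : ℕ → M) (k m : ℕ) :
    ∑ i ∈ range m, f i = ∑ i ∈ range (min k m), f i + ∑ i ∈ Ico k m, f i := by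
  rcases le_total k m with hkm | hmk
  · rw [min_eq_left hkm, sum_range_add_sum_Ico f hkm]
  · rw [min_eq_right hmk, Ico_eq_empty_of_le hmk, sum_empty, add_zero]

theorem le_norm_sum_range_min_or_le_norm_sum_Ico {E : Type*} [SeminormedAddCommGroup E]
    {f : ℕ → E} {δ : ℝ} {m : ℕ} (h : δ + δ ≤ ‖∑ i ∈ range m, f i‖) (k : ℕ) :
    δ ≤ ‖∑ i ∈ range (min k m), f i‖ ∨ δ ≤ ‖∑ i ∈ Ico k m, f i‖ := by
  refine le_or_le_of_add_le_add (h.trans ?_)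
  rw [sum_range_eq_sum_range_min_add_sum_Ico f k m]
  exact norm_add_le _ _

section

variable {X : Type*} [NormedAddCommGroup X] [NormedSpace ℝ X]

def HasBasisConstant (y : ℕ → X) (D : ℝ) : Prop :=
  ∀ m n : ℕ, m ≤ n → ∀ a : ℕ → ℝ,
    ‖∑ i ∈ range m, a i • y i‖ ≤ D * ‖∑ i ∈ range n, a i • y i‖

def IsUnconditionalOn (y : ℕ → X) (B : ℝ) (s : Finset ℕ) : Prop :=
  ∀ a : ℕ → ℝ, ∀ I ⊆ s, ‖∑ i ∈ I, a i • y i‖ ≤ B * ‖∑ i ∈ s, a i • y i‖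

variable {y : ℕ → X}

theorem HasBasisConstant.norm_sum_Ico_le {D : ℝ} (hy : HasBasisConstant y D) (b : ℕ → ℝ)
    (k m : ℕ) : ‖∑ i ∈ Ico k m, b i • y i‖ ≤ (1 + D) * ‖∑ i ∈ range m, b i • y i‖ := by
  have hsplit := sum_range_eq_sum_range_min_add_sum_Ico (fun i => b i • y i) k m
  rw [eq_sub_of_add_eq' hsplit.symm]
  calc ‖∑ i ∈ range m, b i • y i - ∑ i ∈ range (min k m), b i • y i‖
      ≤ ‖∑ i ∈ range m, b i • y i‖ + ‖∑ i ∈ range (min k m), b i • y i‖ := norm_sub_le _ _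
    _ ≤ ‖∑ i ∈ range m, b i • y i‖ + D * ‖∑ i ∈ range m, b i • y i‖ := by
        gcongr; exact hy _ _ (min_le_right k m) b
    _ = (1 + D) * ‖∑ i ∈ range m, b i • y i‖ := by ring

theorem IsUnconditionalOn.mono {B : ℝ} {s t : Finset ℕ} (hy : IsUnconditionalOn y B s)
    (hts : t ⊆ s) : IsUnconditionalOn y B t := by
  classical
  intro a I hIt
  have hI : ∑ i ∈ I, (if i ∈ t then a i else 0) • y i = ∑ i ∈ I, a i • y i :=
    sum_congr rfl fun i hi => by rw [if_pos (hIt hi)]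
  have hs : ∑ i ∈ s, (if i ∈ t then a i else 0) • y i = ∑ i ∈ t, a i • y i := by
    simp only [ite_smul, zero_smul, sum_ite_mem, inter_eq_right.mpr hts]
  simpa only [hI, hs] using hy (fun i => if i ∈ t then a i else 0) I (hIt.trans hts)

theorem IsUnconditionalOn.norm_sum_le_two_mul_norm_sum_sign {B : ℝ} {s : Finset ℕ}
    (hy : IsUnconditionalOn y B s) {ε : ℕ → ℝ} (hε : ∀ i, ε i = 1 ∨ ε i = -1) (a : ℕ → ℝ) :
    ‖∑ i ∈ s, a i • y i‖ ≤ 2 * B * ‖∑ i ∈ s, (ε i * a i) • y i‖ := by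
  set P := s.filter (fun i => ε i = 1)
  set N := s.filter (fun i => ¬ ε i = 1)
  have hP : ∑ i ∈ P, a i • y i = ∑ i ∈ P, (ε i * a i) • y i :=
    sum_congr rfl fun i hi => by rw [(mem_filter.mp hi).2, one_mul]
  have hN : ∑ i ∈ N, a i • y i = -∑ i ∈ N, (ε i * a i) • y i := by
    rw [← sum_neg_distrib]
    refine sum_congr rfl fun i hi => ?_
    rw [(hε i).resolve_left (mem_filter.mp hi).2, neg_one_mul, neg_smul, neg_neg]
  calc ‖∑ i ∈ s, a i • y i‖ = ‖∑ i ∈ P, a i • y i + ∑ i ∈ N, a i • y i‖ := by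
        rw [sum_filter_add_sum_filter_not]
    _ ≤ ‖∑ i ∈ P, (ε i * a i) • y i‖ + ‖∑ i ∈ N, (ε i * a i) • y i‖ := by
        rw [hP, hN, ← sub_eq_add_neg]; exact norm_sub_le _ _
    _ ≤ B * ‖∑ i ∈ s, (ε i * a i) • y i‖ + B * ‖∑ i ∈ s, (ε i * a i) • y i‖ :=
        add_le_add (hy _ P (filter_subset _ _)) (hy _ N (filter_subset _ _))
    _ = 2 * B * ‖∑ i ∈ s, (ε i * a i) • y i‖ := by ring

theorem norm_sum_range_min_le_two_mul_norm_sum_sign {D B : ℝ} {k : ℕ}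
    (hbasis : HasBasisConstant y D) (hunc : IsUnconditionalOn y B (range k)) (hB : 0 ≤ B)
    {ε : ℕ → ℝ} (hε : ∀ i, ε i = 1 ∨ ε i = -1) (a : ℕ → ℝ) (m : ℕ) :
    ‖∑ i ∈ range (min k m), a i • y i‖ ≤
      2 * B * D * ‖∑ i ∈ range m, (ε i * a i) • y i‖ :=
  calc ‖∑ i ∈ range (min k m), a i • y i‖
      ≤ 2 * B * ‖∑ i ∈ range (min k m), (ε i * a i) • y i‖ :=
        (hunc.mono (range_subset_range.2 (min_le_left k m))).norm_sum_le_two_mul_norm_sum_sign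
          hε a
    _ ≤ 2 * B * (D * ‖∑ i ∈ range m, (ε i * a i) • y i‖) := by
        gcongr; exact hbasis _ _ (min_le_right k m) _
    _ = 2 * B * D * ‖∑ i ∈ range m, (ε i * a i) • y i‖ := by ring

end

theorem convex_unconditionality_splitting_general
    {X : Type*} [NormedAddCommGroup X] [NormedSpace ℝ X]
    (y : ℕ → X)
    (D : ℝ) (hD : 1 ≤ D)
    (hbasic : ∀ m n : ℕ, m ≤ n → ∀ a : ℕ → ℝ,
      ‖∑ i ∈ Finset.range m, a i • y i‖ ≤ D * ‖∑ i ∈ Finset.range n, a i • y i‖)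
    (k : ℕ) (δ : ℝ) (hδ : δ = 1 / (2 * (k : ℝ)))
    (R : ℝ)
    (htail : ∀ m : ℕ, ∀ a : ℕ → ℝ, (∑ i ∈ Finset.Ico k m, |a i|) ≤ 1 →
      δ ≤ ‖∑ i ∈ Finset.Ico k m, a i • y i‖ →
      ∀ ε : ℕ → ℝ, (∀ i, ε i = 1 ∨ ε i = -1) →
        R ≤ ‖∑ i ∈ Finset.Ico k m, (ε i * a i) • y i‖)
    (B : ℝ) (hB : 0 < B)
    (hfin : ∀ a : ℕ → ℝ, ∀ I : Finset ℕ, I ⊆ Finset.range k →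
      ‖∑ i ∈ I, a i • y i‖ ≤ B * ‖∑ i ∈ Finset.range k, a i • y i‖) :
    ∀ m : ℕ, ∀ a : ℕ → ℝ, (∑ i ∈ Finset.range m, |a i|) ≤ 1 →
      1 / (k : ℝ) ≤ ‖∑ i ∈ Finset.range m, a i • y i‖ →
      ∀ ε : ℕ → ℝ, (∀ i, ε i = 1 ∨ ε i = -1) →
        min (δ / (2 * B * D) * (1 / 2)) (δ / (2 * D) * R) ≤
          ‖∑ i ∈ Finset.range m, (ε i * a i) • y i‖ := by
  intro m a hsum hlarge ε hε
  set S := ‖∑ i ∈ range m, (ε i * a i) • y i‖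
  have hS : 0 ≤ S := norm_nonneg _
  have hD0 : 0 < D := by linarith
  have hδ0 : 0 ≤ δ := by rw [hδ]; positivity
  have hδ1 : δ ≤ 1 := by
    rw [hδ, one_div, mul_inv]
    linarith [Nat.cast_inv_le_one (α := ℝ) k]
  have hlarge' : δ + δ ≤ ‖∑ i ∈ range m, a i • y i‖ := by
    convert hlarge using 1; rw [hδ]; ring
  rcases le_norm_sum_range_min_or_le_norm_sum_Ico hlarge' k with hhead | htail_large
  · have hbound :=
      hhead.trans (norm_sum_range_min_le_two_mul_norm_sum_sign hbasic hfin hB.le hε a m)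
    have hratio : δ / (2 * B * D) ≤ S := by rw [div_le_iff₀ (by positivity)]; linarith
    exact (min_le_left _ _).trans (by linarith)
  · have htail_sum : ∑ i ∈ Ico k m, |a i| ≤ 1 :=
      (sum_le_sum_of_subset_of_nonneg
        (by rw [range_eq_Ico]; exact Ico_subset_Ico_left k.zero_le)
        fun i _ _ => abs_nonneg (a i)).trans hsum
    have hbound : R ≤ (1 + D) * S :=
      (htail m a htail_sum htail_large ε hε).trans (HasBasisConstant.norm_sum_Ico_le hbasic _ k m)
    refine (min_le_right _ _).trans ?_
    calc δ / (2 * D) * R ≤ δ / (2 * D) * ((1 + D) * S) := by gcongr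
      _ = δ * ((1 + D) / (2 * D)) * S := by ring
      _ ≤ 1 * 1 * S := by gcongr; rw [div_le_one (by positivity)]; linarith
      _ = S := by ring

/-- **Splitting step for convex unconditionality.**  Let `(y_i)` be a normalized `D`-basic
sequence, `k ≥ 1`, `δ = 1/(2k)`, suppose the finite sequence `(y_0,…,y_{k-1})` is
`B`-unconditional and every absolutely convex combination of the tail `(y_i)_{i≥k}` of norm
`≥ δ` has all its signed sums of norm `≥ R`.  Then every absolutely convex combination
`∑ a_n y_n` of norm `≥ 1/k` has all its signed sums of norm
`≥ min( δ/(2BD) · (1/2) , (δ/(2D)) · R )`. -/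
theorem convex_unconditionality_splitting
    {X : Type*} [NormedAddCommGroup X] [NormedSpace ℝ X]
    (y : ℕ → X) (hnorm : ∀ i, ‖y i‖ = 1)
    (D : ℝ) (hD : 1 ≤ D)
    (hbasic : ∀ m n : ℕ, m ≤ n → ∀ a : ℕ → ℝ,
      ‖∑ i ∈ Finset.range m, a i • y i‖ ≤ D * ‖∑ i ∈ Finset.range n, a i • y i‖)
    (k : ℕ) (hk : 0 < k) (δ : ℝ) (hδ : δ = 1 / (2 * (k : ℝ)))
    (R : ℝ) (hR : 0 < R)
    (htail : ∀ m : ℕ, ∀ a : ℕ → ℝ, (∑ i ∈ Finset.Ico k m, |a i|) ≤ 1 →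
      δ ≤ ‖∑ i ∈ Finset.Ico k m, a i • y i‖ →
      ∀ ε : ℕ → ℝ, (∀ i, ε i = 1 ∨ ε i = -1) →
        R ≤ ‖∑ i ∈ Finset.Ico k m, (ε i * a i) • y i‖)
    (B : ℝ) (hB : 0 < B)
    (hfin : ∀ a : ℕ → ℝ, ∀ I : Finset ℕ, I ⊆ Finset.range k →
      ‖∑ i ∈ I, a i • y i‖ ≤ B * ‖∑ i ∈ Finset.range k, a i • y i‖) :
    ∀ m : ℕ, ∀ a : ℕ → ℝ, (∑ i ∈ Finset.range m, |a i|) ≤ 1 →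
      1 / (k : ℝ) ≤ ‖∑ i ∈ Finset.range m, a i • y i‖ →
      ∀ ε : ℕ → ℝ, (∀ i, ε i = 1 ∨ ε i = -1) →
        min (δ / (2 * B * D) * (1 / 2)) (δ / (2 * D) * R) ≤
          ‖∑ i ∈ Finset.range m, (ε i * a i) • y i‖ :=
  convex_unconditionality_splitting_general y D hD hbasic k δ hδ R htail B hB hfin
end

section
/- Let S be the dyadic tree and (x_s)_{s∈S} a family of nonzero vectors in a separable Banach space X. Assume Stern's theorem: for every Borel set A ⊆ C(S) there is a subtree T of S with C(T) ⊆ A or C(T) ∩ A = ∅. If for every chain β ∈ C(S) the sequence (x_s)_{s∈β} contains an unconditional subsequence, then there exist a subtree T of S and a constant C > 0 such that for every chain β of T the sequence (x_s)_{s∈β} is C-unconditional. -/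
/-!
Suppose that for no `k` is there a subtree all of whose chains are `(k+1)`-unconditional. The
set of `(k+1)`-unconditional chains is Borel (each condition involves finitely many
coordinates), so Stern's theorem, applied inside a subtree above its root, gives a smaller
subtree with a strictly longer root none of whose chains is `(k+1)`-unconditional. Iterating
over `k`, the roots form a chain `β` whose terms beyond `k` lie in the `k`-th subtree. A
`C`-unconditional subsequence of `β`, cut beyond `⌈C⌉₊`, is then a chain of the `⌈C⌉₊`-th
subtree that is `(⌈C⌉₊ + 1)`-unconditional: a contradiction.
-/

open Filter Topology Set

noncomputable section

/-- `y` is `C`-unconditional. -/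
def UnconditionalWith {X : Type*} [NormedAddCommGroup X] [NormedSpace ℝ X]
    (C : ℝ) (y : ℕ → X) : Prop :=
  ∀ n : ℕ, ∀ a : ℕ → ℝ, ∀ A : Finset ℕ, A ⊆ Finset.range n →
    ‖∑ i ∈ A, a i • y i‖ ≤ C * ‖∑ i ∈ Finset.range n, a i • y i‖

instance : MeasurableSingletonClass (List Bool) :=
  ⟨fun _ => MeasurableSpace.measurableSet_top⟩

theorem measurableSet_setOf_of_dependsOn {ι α : Type*} [MeasurableSpace α] [Countable α]
    [MeasurableSingletonClass α] {p : (ι → α) → Prop} {s : Set ι} (hs : s.Finite)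
    (hp : DependsOn p s) : MeasurableSet {x | p x} := by
  obtain ⟨g, rfl⟩ := dependsOn_iff_exists_comp.1 hp
  have : Finite s := hs.to_subtype
  exact measurable_pi_lambda _ (fun i => measurable_pi_apply _)
    (Set.to_countable _).measurableSet

section Unconditional

variable {X : Type*} [NormedAddCommGroup X] [NormedSpace ℝ X]

theorem UnconditionalWith.mono {C C' : ℝ} {y : ℕ → X} (h : UnconditionalWith C y)
    (hC : C ≤ C') : UnconditionalWith C' y := fun n a A hA =>
  (h n a A hA).trans (mul_le_mul_of_nonneg_right hC (norm_nonneg _))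

theorem UnconditionalWith.comp_strictMono {C : ℝ} {y : ℕ → X} (h : UnconditionalWith C y)
    {n : ℕ → ℕ} (hn : StrictMono n) : UnconditionalWith C fun i => y (n i) := by
  intro m a A hA
  set b : ℕ → ℝ := Function.extend n a 0
  have sum_eq_sum_image (B : Finset ℕ) :
      ∑ i ∈ B, a i • y (n i) = ∑ j ∈ B.image n, b j • y j := by
    rw [Finset.sum_image hn.injective.injOn]
    simp only [b, hn.injective.extend_apply]
  have image_range : (Finset.range m).image n ⊆ Finset.range (n m) := by
    simp only [Finset.image_subset_iff, Finset.mem_range]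
    exact fun i hi => hn hi
  have sum_image_range :
      ∑ j ∈ (Finset.range m).image n, b j • y j = ∑ j ∈ Finset.range (n m), b j • y j := by
    refine Finset.sum_subset image_range fun j hj hj' => ?_
    have hb : b j = 0 := Function.extend_apply' _ _ _ <| by
      rintro ⟨i, rfl⟩
      exact hj' (Finset.mem_image_of_mem n (Finset.mem_range.2
        (hn.lt_iff_lt.1 (Finset.mem_range.1 hj))))
    rw [hb, zero_smul]
  rw [sum_eq_sum_image, sum_eq_sum_image, sum_image_range]
  exact h _ _ _ ((Finset.image_subset_image hA).trans image_range)

theorem measurableSet_setOf_unconditionalWith {α : Type*} [MeasurableSpace α] [Countable α]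
    [MeasurableSingletonClass α] (y : α → X) (C : ℝ) :
    MeasurableSet {s : ℕ → α | UnconditionalWith C fun i => y (s i)} := by
  simp only [UnconditionalWith]
  rw [Set.ofPred_forall]
  refine MeasurableSet.iInter fun n => measurableSet_setOf_of_dependsOn (Set.finite_Iio n) ?_
  intro s t hst
  have hsum (B : Finset ℕ) (hB : B ⊆ Finset.range n) (a : ℕ → ℝ) :
      ∑ i ∈ B, a i • y (s i) = ∑ i ∈ B, a i • y (t i) :=
    Finset.sum_congr rfl fun i hi => by rw [hst i (Finset.mem_range.1 (hB hi))]
  refine propext <| forall_congr' fun a => forall_congr' fun A => imp_congr_right fun hA => ?_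
  rw [hsum A hA, hsum _ subset_rfl]

end Unconditional

theorem IsChainSeq.length_strictMono {s : ℕ → List Bool} (hs : IsChainSeq s) :
    StrictMono fun i => (s i).length :=
  strictMono_nat_of_lt_succ fun i =>
    (hs i).1.length_le.lt_of_ne fun h => (hs i).2 ((hs i).1.eq_of_length h)

theorem IsChainSeq.prefix_of_le {s : ℕ → List Bool} (hs : IsChainSeq s) {i j : ℕ}
    (hij : i ≤ j) : s i <+: s j := by
  induction j, hij using Nat.le_induction with
  | base => exact List.prefix_refl _
  | succ j _ ih => exact ih.trans (hs j).1

theorem IsChainSeq.comp_strictMono {s : ℕ → List Bool} (hs : IsChainSeq s) {n : ℕ → ℕ}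
    (hn : StrictMono n) : IsChainSeq fun i => s (n i) := fun i =>
  ⟨hs.prefix_of_le (hn i.lt_succ_self).le,
    fun h => (hs.length_strictMono (hn i.lt_succ_self)).ne (congrArg List.length h)⟩

section Subtree

variable {E e : List Bool → List Bool}

theorem isSubtree_id : IsSubtree id := fun _ _ => Iff.rfl

theorem IsSubtree.comp (hE : IsSubtree E) (he : IsSubtree e) : IsSubtree (E ∘ e) :=
  fun s t => (he s t).trans (hE (e s) (e t))

theorem IsSubtree.cons (hE : IsSubtree E) (b : Bool) : IsSubtree fun l => E (b :: l) :=
  fun _ _ => (List.cons_prefix_cons.trans (and_iff_right rfl)).symm.trans (hE _ _)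

theorem IsSubtree.injective (hE : IsSubtree E) : Function.Injective E := fun s t h =>
  ((hE s t).2 (h ▸ List.prefix_refl _)).eq_of_length_le
    ((hE t s).2 (h ▸ List.prefix_refl _)).length_le

theorem IsSubtree.isChainSeq_of_comp (hE : IsSubtree E) {u : ℕ → List Bool}
    (hu : IsChainSeq fun i => E (u i)) : IsChainSeq u := fun i =>
  ⟨(hE _ _).2 (hu i).1, fun h => (hu i).2 (congrArg E h)⟩

theorem IsSubtree.exists_lift (hE : IsSubtree E) {β : ChainSpace}
    (hβ : ∀ i, β.1 i ∈ Set.range (E ∘ e)) :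
    ∃ γ : ChainSpace, (∀ i, γ.1 i ∈ Set.range e) ∧ (fun i => E (γ.1 i)) = β.1 := by
  choose u hu using hβ
  have hβu : β.1 = fun i => E (e (u i)) := funext fun i => (hu i).symm
  exact ⟨⟨fun i => e (u i), hE.isChainSeq_of_comp (hβu ▸ β.2)⟩, fun i => ⟨u i, rfl⟩, hβu.symm⟩

theorem IsSubtree.root_strictPrefix_cons (hE : IsSubtree E) (b : Bool) (l : List Bool) :
    E [] <+: E (b :: l) ∧ E [] ≠ E (b :: l) :=
  ⟨(hE _ _).1 (List.nil_prefix), fun h => List.cons_ne_nil b l (hE.injective h).symm⟩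

end Subtree

def SternProperty : Prop :=
  ∀ A : Set ChainSpace, MeasurableSet A →
    ∃ e : List Bool → List Bool, IsSubtree e ∧
      ((∀ β : ChainSpace, (∀ i, β.1 i ∈ Set.range e) → β ∈ A) ∨
       (∀ β : ChainSpace, (∀ i, β.1 i ∈ Set.range e) → β ∉ A))

section Stern

variable {X : Type*} [NormedAddCommGroup X] [NormedSpace ℝ X] {E : List Bool → List Bool}

theorem SternProperty.exists_subtree_unconditionalWith_or_not (hStern : SternProperty)
    (hE : IsSubtree E) (y : List Bool → X) (C : ℝ) :
    ∃ e, IsSubtree e ∧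
      ((∀ β : ChainSpace, (∀ i, β.1 i ∈ Set.range (E ∘ e)) →
          UnconditionalWith C fun i => y (β.1 i)) ∨
       (∀ β : ChainSpace, (∀ i, β.1 i ∈ Set.range (E ∘ e)) →
          ¬UnconditionalWith C fun i => y (β.1 i))) := by
  obtain ⟨e, he, hAe⟩ := hStern {γ | UnconditionalWith C fun i => y (E (γ.1 i))}
    (measurable_subtype_coe (measurableSet_setOf_unconditionalWith (y ∘ E) C))
  refine ⟨e, he, hAe.imp (fun hA β hβ => ?_) (fun hA β hβ => ?_)⟩ <;>
  · obtain ⟨γ, hγe, hγβ⟩ := hE.exists_lift hβ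
    rw [← hγβ]
    exact hA γ hγe

theorem SternProperty.exists_subtree_forall_not_unconditionalWith (hStern : SternProperty)
    (hE : IsSubtree E) (y : List Bool → X) {C : ℝ}
    (hbad : ∀ e, IsSubtree e → ∃ β : ChainSpace, (∀ i, β.1 i ∈ Set.range e) ∧
      ¬UnconditionalWith C fun i => y (β.1 i)) :
    ∃ E', IsSubtree E' ∧ Set.range E' ⊆ Set.range E ∧ (E [] <+: E' [] ∧ E [] ≠ E' []) ∧
      ∀ β : ChainSpace, (∀ i, β.1 i ∈ Set.range E') →
        ¬UnconditionalWith C fun i => y (β.1 i) := by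
  obtain ⟨e, he, hgood | hbad'⟩ :=
    hStern.exists_subtree_unconditionalWith_or_not (hE.cons true) y C
  · obtain ⟨β, hβ, hβC⟩ := hbad _ ((hE.cons true).comp he)
    exact absurd (hgood β hβ) hβC
  · refine ⟨_, (hE.cons true).comp he, ?_, hE.root_strictPrefix_cons true (e []), hbad'⟩
    rintro _ ⟨l, rfl⟩
    exact ⟨true :: e l, rfl⟩

end Stern

theorem exists_chain_of_nested_subtrees {Q : ℕ → (List Bool → List Bool) → Prop}
    (step : ∀ k E, IsSubtree E → ∃ E', IsSubtree E' ∧ Set.range E' ⊆ Set.range E ∧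
      (E [] <+: E' [] ∧ E [] ≠ E' []) ∧ Q k E') :
    ∃ β : ChainSpace, ∀ k, ∃ E, Q k E ∧ ∀ i, k < i → β.1 i ∈ Set.range E := by
  choose F hF hF_range hF_root hF_Q using step
  let T : ℕ → {E // IsSubtree E} := fun k =>
    Nat.rec ⟨id, isSubtree_id⟩ (fun k E => ⟨F k E.1 E.2, hF k E.1 E.2⟩) k
  have hT_anti : Antitone fun k => Set.range (T k).1 :=
    antitone_nat_of_succ_le fun k => hF_range k _ _
  refine ⟨⟨fun k => (T k).1 [], fun k => hF_root k _ _⟩, fun k =>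
    ⟨_, hF_Q k (T k).1 (T k).2, fun i hi => hT_anti (Nat.succ_le_of_lt hi) ⟨[], rfl⟩⟩⟩

theorem subtree_uniformly_unconditional_general
    {X : Type*} [NormedAddCommGroup X] [NormedSpace ℝ X]
    (x : List Bool → X)
    (hStern : ∀ A : Set ChainSpace, MeasurableSet A →
      ∃ e : List Bool → List Bool, IsSubtree e ∧
        ((∀ β : ChainSpace, (∀ i, β.1 i ∈ Set.range e) → β ∈ A) ∨
         (∀ β : ChainSpace, (∀ i, β.1 i ∈ Set.range e) → β ∉ A)))
    (hsub : ∀ β : ChainSpace, ∃ n : ℕ → ℕ, StrictMono n ∧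
      ∃ C : ℝ, 0 < C ∧ UnconditionalWith C (fun i => x (β.1 (n i)))) :
    ∃ C : ℝ, 0 < C ∧ ∃ e : List Bool → List Bool, IsSubtree e ∧
      ∀ β : ChainSpace, (∀ i, β.1 i ∈ Set.range e) →
        UnconditionalWith C (fun i => x (β.1 i)) := by
  by_contra! hbad
  obtain ⟨β, hβ⟩ := exists_chain_of_nested_subtrees fun k E hE =>
    SternProperty.exists_subtree_forall_not_unconditionalWith hStern hE x
      (hbad ((k : ℝ) + 1) (by positivity))
  obtain ⟨n, hn, C, -, hC⟩ := hsub β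
  obtain ⟨E, hE, hβE⟩ := hβ ⌈C⌉₊
  have hm : StrictMono fun i => n (i + ⌈C⌉₊ + 1) := hn.comp fun a b h => by omega
  refine hE ⟨_, β.2.comp_strictMono hm⟩ (fun i => hβE _ ?_)
    ((hC.comp_strictMono fun a b h => by omega).mono ?_)
  · exact (by omega : ⌈C⌉₊ < i + ⌈C⌉₊ + 1).trans_le hn.le_apply
  · linarith [Nat.le_ceil C]

/-- If `(x_s)_{s∈S}` is a family of nonzero vectors such that along every infinite chain the
sequence has an unconditional subsequence, then (assuming Stern's theorem for Borel sets of
chains) there are a subtree `T` of `S` and a constant `C > 0` such that `(x_s)_{s∈β}` is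
`C`-unconditional for every chain `β` of `T`. -/
theorem subtree_uniformly_unconditional
    {X : Type*} [NormedAddCommGroup X] [NormedSpace ℝ X] [CompleteSpace X]
    [TopologicalSpace.SeparableSpace X]
    (x : List Bool → X) (hx : ∀ s, x s ≠ 0)
    (hStern : ∀ A : Set ChainSpace, MeasurableSet A →
      ∃ e : List Bool → List Bool, IsSubtree e ∧
        ((∀ β : ChainSpace, (∀ i, β.1 i ∈ Set.range e) → β ∈ A) ∨
         (∀ β : ChainSpace, (∀ i, β.1 i ∈ Set.range e) → β ∉ A)))
    (hsub : ∀ β : ChainSpace, ∃ n : ℕ → ℕ, StrictMono n ∧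
      ∃ C : ℝ, 0 < C ∧ UnconditionalWith C (fun i => x (β.1 (n i)))) :
    ∃ C : ℝ, 0 < C ∧ ∃ e : List Bool → List Bool, IsSubtree e ∧
      ∀ β : ChainSpace, (∀ i, β.1 i ∈ Set.range e) →
        UnconditionalWith C (fun i => x (β.1 i)) :=
  subtree_uniformly_unconditional_general x hStern hsub
end
end
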